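/- Let (A, ⟦·,·⟧, Q) be a ℤ₂-graded commutative algebra equipped with an odd Jacobi structure. Then the Loday–Poisson bracket obeys the Leibniz rule with respect to the derived product: for all homogeneous f, g, h ∈ A, {f, g ∗ h} = {f,g} ∗ h + (−1)^{|f|(|g|+1)} g ∗ {f,h}. -/
import Mathlib


/-- The sign `(−1)^i` for a parity `i ∈ ℤ₂`, as an integer. -/
def ksign (i : ZMod 2) : ℤ := (-1) ^ i.val

/-- A ℤ₂-graded commutative ℝ-algebra `A = A₀ ⊕ A₁` (with unit `1 ∈ A₀` and
`f * g = (−1)^{|f||g|} g * f` for homogeneous `f`, `g`) equipped with an odd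
Jacobi structure `(⟦·,·⟧, Q)`: an ℝ-bilinear bracket `br` of odd parity and an
ℝ-linear odd map `Q`, satisfying axioms (i)–(vii). -/
structure OddJacobiAlgebra (A : Type*) [Ring A] [Algebra ℝ A] where
  /-- the grading -/
  grade : ZMod 2 → Submodule ℝ A
  /-- `A = A₀ ⊕ A₁` -/
  internal : DirectSum.IsInternal grade
  /-- the unit is even -/
  one_mem : (1 : A) ∈ grade 0
  /-- graded commutativity -/
  supercomm : ∀ (i j : ZMod 2) (f g : A), f ∈ grade i → g ∈ grade j →
    f * g = ksign (i * j) • (g * f)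
  /-- the odd Jacobi bracket `⟦·,·⟧` -/
  br : A →ₗ[ℝ] A →ₗ[ℝ] A
  /-- the homological vector field `Q` -/
  Q : A →ₗ[ℝ] A
  /-- the bracket has odd parity -/
  br_parity : ∀ (i j : ZMod 2) (f g : A), f ∈ grade i → g ∈ grade j →
    br f g ∈ grade (i + j + 1)
  /-- `Q` has odd parity -/
  Q_parity : ∀ (i : ZMod 2) (f : A), f ∈ grade i → Q f ∈ grade (i + 1)
  /-- (i) graded skewsymmetry of the bracket (with shifted parities) -/
  br_skew : ∀ (i j : ZMod 2) (f g : A), f ∈ grade i → g ∈ grade j →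
    br f g = -(ksign ((i + 1) * (j + 1)) • br g f)
  /-- (ii) graded Jacobi identity (with shifted parities) -/
  br_jacobi : ∀ (i j k : ZMod 2) (f g h : A), f ∈ grade i → g ∈ grade j → h ∈ grade k →
    br f (br g h) = br (br f g) h + ksign ((i + 1) * (j + 1)) • br g (br f h)
  /-- (iii) modified Leibniz rule for the bracket -/
  br_leibniz : ∀ (i j k : ZMod 2) (f g h : A), f ∈ grade i → g ∈ grade j → h ∈ grade k →
    br f (g * h) = br f g * h + ksign ((i + 1) * j) • (g * br f h) - br f 1 * (g * h)
  /-- (iv) `Q` is an odd derivation -/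
  Q_der : ∀ (i j : ZMod 2) (f g : A), f ∈ grade i → g ∈ grade j →
    Q (f * g) = Q f * g + ksign i • (f * Q g)
  /-- (v) `Q` is homological: `Q ∘ Q = 0` -/
  Q_sq : ∀ f : A, Q (Q f) = 0
  /-- (vi) `Q(f) = (−1)^{|f|} ⟦f,1⟧` -/
  Q_br_one : ∀ (i : ZMod 2) (f : A), f ∈ grade i → Q f = ksign i • br f 1
  /-- (vii) `Q` is a Jacobi derivation of the bracket -/
  Q_jacobi : ∀ (i j : ZMod 2) (f g : A), f ∈ grade i → g ∈ grade j →
    Q (br f g) = br (Q f) g + ksign (i + 1) • br f (Q g)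

namespace OddJacobiAlgebra

variable {A : Type*} [Ring A] [Algebra ℝ A]

/-- The Loday–Poisson bracket `{f,g} := (−1)^{|f|+1} ⟦Q(f), g⟧`,
where `i` is the parity of the homogeneous element `f`. -/
def lp (J : OddJacobiAlgebra A) (i : ZMod 2) (f g : A) : A :=
  ksign (i + 1) • J.br (J.Q f) g

/-- The Hamiltonian operator `X_f(g) := (−1)^{|f|} ⟦f,g⟧ − Q(f) g` of a homogeneous
element `f` of parity `i`, with respect to the odd Jacobi structure. -/
def X (J : OddJacobiAlgebra A) (i : ZMod 2) (f : A) : A → A :=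
  fun g => ksign i • J.br f g - J.Q f * g

/-- The Hamiltonian operator `Y_f(g) := {f,g}` of a homogeneous element `f` of
parity `i`, with respect to the Loday–Poisson bracket. -/
def Y (J : OddJacobiAlgebra A) (i : ZMod 2) (f : A) : A → A :=
  fun g => J.lp i f g

/-- The derived product `f ∗ g := (−1)^{|f|+1} Q(f) g`, where `i` is the parity of `f`. -/
def dp (J : OddJacobiAlgebra A) (i : ZMod 2) (f g : A) : A :=
  ksign (i + 1) • (J.Q f * g)

end OddJacobiAlgebra

/-- Supercommutator `[U,V] := U∘V − (−1)^{|U||V|} V∘U` of homogeneous operators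
`U`, `V` of parities `pU`, `pV`. -/
def scomm {A : Type*} [Ring A] (pU pV : ZMod 2) (U V : A → A) : A → A :=
  fun h => U (V h) - ksign (pU * pV) • V (U h)

private lemma ksign_sq : ∀ c : ZMod 2, ksign c * ksign c = 1 := by decide

private lemma zmod2_add_two : ∀ c : ZMod 2, c + 1 + 1 = c := by decide

private lemma ksign_fact : ∀ i j : ZMod 2,
    ksign (i + 1) * ksign (j + 1) = ksign (i + j + 1) * (ksign (i + 1) * ksign i) := by decide

/-- The Loday–Poisson bracket obeys the Leibniz rule with respect to the derived
product: `{f, g ∗ h} = {f,g} ∗ h + (−1)^{|f|(|g|+1)} g ∗ {f,h}` for homogeneous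
`f,g,h` (here `{f,g}` has parity `|f|+|g|`). -/
theorem lodayPoisson_derived_product_leibniz {A : Type*} [Ring A] [Algebra ℝ A]
    (J : OddJacobiAlgebra A) (i j k : ZMod 2) (f g h : A)
    (hf : f ∈ J.grade i) (hg : g ∈ J.grade j) (hh : h ∈ J.grade k) :
    J.lp i f (J.dp j g h) =
      J.dp (i + j) (J.lp i f g) h + ksign (i * (j + 1)) • J.dp j g (J.lp i f h) := by
  have hQf := J.Q_parity i f hf
  have hQg := J.Q_parity j g hg
  -- ⟦Q f, 1⟧ = 0
  have hbr1 : J.br (J.Q f) 1 = 0 := by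
    have h0 := J.Q_br_one (i + 1) (J.Q f) hQf
    rw [J.Q_sq] at h0
    calc J.br (J.Q f) 1 = (ksign (i + 1) * ksign (i + 1)) • J.br (J.Q f) 1 := by
          rw [ksign_sq, one_smul]
      _ = ksign (i + 1) • (ksign (i + 1) • J.br (J.Q f) 1) := by rw [mul_smul]
      _ = 0 := by rw [← h0, smul_zero]
  -- Q⟦Q f, g⟧ = (-1)^i ⟦Q f, Q g⟧
  have hadd2 : i + 1 + 1 = i := zmod2_add_two i
  have hQbr : J.Q (J.br (J.Q f) g) = ksign i • J.br (J.Q f) (J.Q g) := by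
    have hj := J.Q_jacobi (i + 1) j (J.Q f) g hQf hg
    rw [J.Q_sq, hadd2] at hj
    simpa using hj
  have hleib := J.br_leibniz (i + 1) (j + 1) k (J.Q f) (J.Q g) h hQf hQg hh
  rw [hbr1, hadd2] at hleib
  simp only [OddJacobiAlgebra.lp, OddJacobiAlgebra.dp]
  rw [map_zsmul (J.br (J.Q f)), hleib, map_zsmul J.Q, hQbr]
  simp only [smul_mul_assoc, mul_smul_comm, smul_add, smul_sub, smul_smul, zero_mul, smul_zero,
    sub_zero]
  congr 1
  · congr 1
    exact ksign_fact i j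
  · congr 1
    ring
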